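/- Let k, l ≥ 1 be integers, set m = k + l + 1, and let u ∈ (0,1). Let (Φ_i)_{i=0}^{k−1} with Φ_0 = 0 and (X_j)_{j=0}^{l−1} with X_0 = 0 be as in the multiplication martingale construction (Φ a martingale for (F_i), X_j F_{k−1+j}-measurable with E[X_j | F_{k−2+j}] = X_{j−1}), with increments bounded almost surely by |Φ_i − Φ_{i−1}| ≤ K_x·u·(1+u)^{i−1} and |X_j − X_{j−1}| ≤ K_y·u·(1+u)^{j−1} for constants K_x, K_y ≥ 1. Let δ be a mean-independent rounding error at time m−1 and let Ψ = (1 + Φ_{k−1})(1 + X_{l−1})(1 + δ) − 1 (the relative error of the computed product ẑ = x(1+Φ_{k−1})·y(1+X_{l−1})·(1+δ) of nonzero reals x and y, ẑ = xy(1+Ψ)). Then for every λ ∈ (0,1), with probability at least 1 − λ, |Ψ| ≤ K_x·K_y·√(u·γ_{2(m−1)}(u))·√(ln(2/λ)). -/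

import Mathlib

/-!
`Ψ` is the endpoint of one martingale in the rounding-error filtration: first `Φ`, then
`(1 + Φ_{k-1}) (1 + X_j) - 1`, then the step contributed by `δ`. By telescoping,
`|1 + Φ_i| ≤ Kx (1 + u)^i` and `|1 + X_j| ≤ Ky (1 + u)^j`, so the `n`-th increment is bounded
by `c_n = Kx Ky u (1 + u)^n`. A conditional Hoeffding step (`exp (t y) ≤ cosh (t c) +
(y / c) sinh (t c)` for `|y| ≤ c`, and `cosh x ≤ exp (x² / 2)`) shows that each increment adds
`c_n²` to a sub-Gaussian variance proxy of `Ψ`. The geometric sum gives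
`2 ∑ c_n² ≤ Kx² Ky² u γ_{2(m-1)}(u)`, and a two-sided Chernoff bound with
`exp (-t² / (2 v)) = λ / 2` finishes the proof.
-/

open MeasureTheory ProbabilityTheory Real Finset
open scoped NNReal ENNReal

lemma Real.exp_mul_le_cosh_add_div_mul_sinh {y c : ℝ} (hy : |y| ≤ c) (t : ℝ) :
    exp (t * y) ≤ cosh (t * c) + y / c * sinh (t * c) := by
  rcases ((abs_nonneg y).trans hy).eq_or_lt with hc | hc
  · obtain rfl : y = 0 := abs_nonpos_iff.1 (hc ▸ hy)
    simp [← hc]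
  · have hyc : |y / c| ≤ 1 := by rw [abs_div, abs_of_pos hc]; exact div_le_one_of_le₀ hy hc.le
    convert exp_mul_le_cosh_add_mul_sinh hyc (t * c) using 2
    field_simp

lemma two_mul_sum_sq_mul_geom_le (K : ℝ) {u : ℝ} (hu : 0 ≤ u) (N : ℕ) :
    2 * ∑ n ∈ range N, (K * u * (1 + u) ^ n) ^ 2 ≤ K ^ 2 * (u * ((1 + u) ^ (2 * N) - 1)) := by
  have hgeom := geom_sum_mul ((1 + u) ^ 2) N
  rw [← pow_mul] at hgeom
  have hsum : ∑ n ∈ range N, (K * u * (1 + u) ^ n) ^ 2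
      = (K * u) ^ 2 * ∑ n ∈ range N, ((1 + u) ^ 2) ^ n := by
    rw [mul_sum]; congr 1 with n; rw [← pow_mul, mul_comm 2 n, pow_mul]; ring
  have hnn : 0 ≤ ∑ n ∈ range N, ((1 + u) ^ 2) ^ n := sum_nonneg fun _ _ => by positivity
  rw [hsum, ← hgeom]
  nlinarith [mul_nonneg (mul_nonneg (sq_nonneg (K * u)) hnn) hu]

lemma sum_mul_geom (K u : ℝ) (N : ℕ) :
    ∑ n ∈ range N, K * u * (1 + u) ^ n = K * ((1 + u) ^ N - 1) := by
  rw [← geom_sum_mul, add_sub_cancel_left, ← mul_sum]; ring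

section

variable {Ω : Type*} {m0 : MeasurableSpace Ω} {μ : Measure Ω}

lemma ae_abs_le_sum_of_abs_sub_le {S : ℕ → Ω → ℝ} {c : ℕ → ℝ} {N : ℕ} (h0 : ∀ ω, S 0 ω = 0)
    (hinc : ∀ n < N, ∀ᵐ ω ∂μ, |S (n + 1) ω - S n ω| ≤ c n) :
    ∀ᵐ ω ∂μ, |S N ω| ≤ ∑ n ∈ range N, c n := by
  induction N with
  | zero => simp [h0]
  | succ N ih =>
    filter_upwards [ih fun n hn => hinc n (by omega), hinc N (by omega)] with ω hN hstep
    rw [sum_range_succ]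
    calc |S (N + 1) ω| = |S N ω + (S (N + 1) ω - S N ω)| := by rw [add_sub_cancel]
      _ ≤ _ := (abs_add_le _ _).trans (add_le_add hN hstep)

lemma ae_abs_one_add_le_of_abs_sub_le {S : ℕ → Ω → ℝ} {K u : ℝ} {N : ℕ} (hK : 1 ≤ K)
    (hu : 0 ≤ u) (h0 : ∀ ω, S 0 ω = 0)
    (hinc : ∀ n < N, ∀ᵐ ω ∂μ, |S (n + 1) ω - S n ω| ≤ K * u * (1 + u) ^ n) :
    ∀ᵐ ω ∂μ, |1 + S N ω| ≤ K * (1 + u) ^ N := by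
  filter_upwards [ae_abs_le_sum_of_abs_sub_le h0 hinc] with ω h
  rw [sum_mul_geom] at h
  have : 1 ≤ (1 + u) ^ N := one_le_pow₀ (by linarith)
  calc |1 + S N ω| ≤ 1 + K * ((1 + u) ^ N - 1) := (abs_add_le _ _).trans (by simpa using h)
    _ ≤ K * (1 + u) ^ N := by nlinarith

lemma ae_abs_mul_le_mul {f g : Ω → ℝ} {a b : ℝ} (hf : ∀ᵐ ω ∂μ, |f ω| ≤ a)
    (hg : ∀ᵐ ω ∂μ, |g ω| ≤ b) : ∀ᵐ ω ∂μ, |f ω * g ω| ≤ a * b := by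
  filter_upwards [hf, hg] with ω h1 h2
  rw [abs_mul]
  exact mul_le_mul h1 h2 (abs_nonneg _) ((abs_nonneg _).trans h1)

lemma condExp_sub_ae_eq_zero [IsFiniteMeasure μ] {G : MeasurableSpace Ω} (hG : G ≤ m0) {f g : Ω → ℝ}
    (hf : Integrable f μ) (hg : Integrable g μ) (hgG : StronglyMeasurable[G] g)
    (hfg : μ[f | G] =ᵐ[μ] g) : μ[f - g | G] =ᵐ[μ] 0 := by
  filter_upwards [condExp_sub hf hg G, hfg] with ω h1 h2
  simp [h1, h2, condExp_of_stronglyMeasurable hG hgG hg]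

lemma condExp_mul_ae_eq_zero {G : MeasurableSpace Ω} {f Y : Ω → ℝ}
    (hf : StronglyMeasurable[G] f) (hfY : Integrable (f * Y) μ) (hY : Integrable Y μ)
    (hYmean : μ[Y | G] =ᵐ[μ] 0) : μ[f * Y | G] =ᵐ[μ] 0 := by
  filter_upwards [condExp_mul_of_stronglyMeasurable_left hf hfY hY, hYmean] with ω h1 h2
  simp [h1, h2]

namespace ProbabilityTheory.HasSubgaussianMGF

lemma mono {X : Ω → ℝ} {c c' : ℝ≥0} (h : HasSubgaussianMGF X c μ) (hc : c ≤ c') :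
    HasSubgaussianMGF X c' μ :=
  ⟨h.integrable_exp_mul, fun t => (h.mgf_le t).trans (exp_le_exp.2 (by gcongr))⟩

lemma ofReal_one_sub_le_measure_abs_le [IsProbabilityMeasure μ] {X : Ω → ℝ} {c : ℝ≥0}
    (h : HasSubgaussianMGF X c μ) {ε : ℝ} (hε : 0 ≤ ε) :
    ENNReal.ofReal (1 - 2 * exp (-ε ^ 2 / (2 * c))) ≤ μ {ω | |X ω| ≤ ε} := by
  set p := exp (-ε ^ 2 / (2 * c))
  have tail {Z : Ω → ℝ} (hZ : HasSubgaussianMGF Z c μ) : μ {ω | ε ≤ Z ω} ≤ ENNReal.ofReal p :=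
    (ENNReal.le_ofReal_iff_toReal_le (measure_ne_top _ _) (exp_pos _).le).2 (hZ.measure_ge_le hε)
  have hsplit : {ω | |X ω| ≤ ε}ᶜ ⊆ {ω | ε ≤ X ω} ∪ {ω | ε ≤ (-X) ω} := by
    intro ω hω
    simp only [Set.mem_compl_iff, Set.mem_ofPred_eq, not_le, lt_abs] at hω
    simp only [Set.mem_union, Set.mem_ofPred_eq, Pi.neg_apply]
    exact hω.imp le_of_lt le_of_lt
  have hbad : μ {ω | |X ω| ≤ ε}ᶜ ≤ ENNReal.ofReal (2 * p) :=
    calc μ {ω | |X ω| ≤ ε}ᶜ ≤ μ {ω | ε ≤ X ω} + μ {ω | ε ≤ (-X) ω} :=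
          (measure_mono hsplit).trans (measure_union_le _ _)
      _ ≤ ENNReal.ofReal p + ENNReal.ofReal p := add_le_add (tail h) (tail h.neg)
      _ = ENNReal.ofReal (2 * p) := by
        rw [← ENNReal.ofReal_add (by positivity) (by positivity), two_mul]
  have hcover : 1 ≤ μ {ω | |X ω| ≤ ε} + μ {ω | |X ω| ≤ ε}ᶜ := by
    rw [← measure_univ (μ := μ), ← Set.union_compl_self {ω | |X ω| ≤ ε}]
    exact measure_union_le _ _
  calc ENNReal.ofReal (1 - 2 * p) = 1 - ENNReal.ofReal (2 * p) := by
        rw [ENNReal.ofReal_sub _ (by positivity), ENNReal.ofReal_one]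
    _ ≤ 1 - μ {ω | |X ω| ≤ ε}ᶜ := tsub_le_tsub_left hbad 1
    _ ≤ μ {ω | |X ω| ≤ ε} := tsub_le_iff_right.2 hcover

lemma add_of_condExp_eq_zero [IsFiniteMeasure μ] {G : MeasurableSpace Ω} (hG : G ≤ m0)
    {f Y : Ω → ℝ} {v c : ℝ≥0} (hf : HasSubgaussianMGF f v μ) (hfG : StronglyMeasurable[G] f)
    (hY : AEStronglyMeasurable[m0] Y μ) (hYc : ∀ᵐ ω ∂μ, |Y ω| ≤ c)
    (hYmean : μ[Y | G] =ᵐ[μ] 0) :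
    HasSubgaussianMGF (f + Y) (v + c ^ 2) μ := by
  have hYint : Integrable Y μ := .of_bound hY c (by simpa using hYc)
  have hexpf := hf.integrable_exp_mul
  have hexpY (t : ℝ) : Integrable (fun ω => exp (t * f ω) * Y ω) μ :=
    (hexpf t).mul_bdd hY (by simpa using hYc)
  have hcross (t : ℝ) : ∫ ω, exp (t * f ω) * Y ω ∂μ = 0 := by
    have hexpG : StronglyMeasurable[G] (fun ω => exp (t * f ω)) :=
      continuous_exp.comp_stronglyMeasurable (hfG.const_mul t)
    rw [← integral_condExp hG]
    exact (integral_congr_ae (condExp_mul_ae_eq_zero hexpG (hexpY t) hYint hYmean)).trans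
      (integral_zero _ _)
  have hint (t : ℝ) : Integrable (fun ω => exp (t * (f + Y) ω)) μ := by
    simp_rw [Pi.add_apply, mul_add, exp_add]
    refine (hexpf t).mul_bdd (continuous_exp.comp_aestronglyMeasurable (hY.const_mul t))
      (c := exp (|t| * c)) ?_
    filter_upwards [hYc] with ω hω
    rw [norm_of_nonneg (exp_pos _).le, exp_le_exp]
    calc t * Y ω ≤ |t| * |Y ω| := by rw [← abs_mul]; exact le_abs_self _
      _ ≤ |t| * c := by gcongr
  refine ⟨hint, fun t => ?_⟩
  -- the `sinh` term integrates to `0`: `exp (t * f)` is `G`-measurable and `μ[Y | G] = 0`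
  have hpt : ∀ᵐ ω ∂μ, exp (t * (f + Y) ω) ≤
      cosh (t * c) * exp (t * f ω) + sinh (t * c) / c * (exp (t * f ω) * Y ω) := by
    filter_upwards [hYc] with ω hω
    rw [Pi.add_apply, mul_add, exp_add]
    refine (mul_le_mul_of_nonneg_left (exp_mul_le_cosh_add_div_mul_sinh hω t)
      (exp_pos _).le).trans_eq (by ring)
  calc mgf (f + Y) μ t
      ≤ ∫ ω, cosh (t * c) * exp (t * f ω) + sinh (t * c) / c * (exp (t * f ω) * Y ω) ∂μ :=
        integral_mono_ae (hint t) (((hexpf t).const_mul _).add ((hexpY t).const_mul _)) hpt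
    _ = cosh (t * c) * mgf f μ t := by
        rw [integral_add ((hexpf t).const_mul _) ((hexpY t).const_mul _),
          integral_const_mul, integral_const_mul, hcross, mul_zero, add_zero, mgf]
    _ ≤ exp (c ^ 2 * t ^ 2 / 2) * exp (v * t ^ 2 / 2) :=
        mul_le_mul ((cosh_le_exp_half_sq _).trans_eq (congrArg exp (by ring))) (hf.mgf_le t)
          mgf_nonneg (exp_pos _).le
    _ = exp (↑(v + c ^ 2) * t ^ 2 / 2) := by rw [← exp_add]; push_cast; ring_nf

lemma add_mul_of_condExp_eq_zero [IsFiniteMeasure μ] {G : MeasurableSpace Ω} (hG : G ≤ m0)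
    {f g Y : Ω → ℝ} {v c : ℝ≥0} (hf : HasSubgaussianMGF f v μ) (hfG : StronglyMeasurable[G] f)
    (hgG : StronglyMeasurable[G] g) (hY : Integrable Y μ) (hYmean : μ[Y | G] =ᵐ[μ] 0)
    (hgY : ∀ᵐ ω ∂μ, |g ω * Y ω| ≤ c) :
    HasSubgaussianMGF (f + g * Y) (v + c ^ 2) μ := by
  have hgYm : AEStronglyMeasurable[m0] (g * Y) μ :=
    ((hgG.mono hG).aestronglyMeasurable).mul hY.aestronglyMeasurable
  exact hf.add_of_condExp_eq_zero hG hfG hgYm hgY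
    (condExp_mul_ae_eq_zero hgG (.of_bound hgYm c (by simpa using hgY)) hY hYmean)

lemma mul_one_add_sub_one_of_martingale [IsFiniteMeasure μ] {G : ℕ → MeasurableSpace Ω}
    (hG : ∀ n, G n ≤ m0) {g : Ω → ℝ} {X : ℕ → Ω → ℝ} {v : ℝ≥0} {c : ℕ → ℝ≥0} {N : ℕ}
    (hg : HasSubgaussianMGF (fun ω => g ω - 1) v μ) (hgG : ∀ n ≤ N, StronglyMeasurable[G n] g)
    (hX0 : ∀ ω, X 0 ω = 0) (hXG : ∀ n ≤ N, StronglyMeasurable[G n] (X n))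
    (hXint : ∀ n ≤ N, Integrable (X n) μ) (hXmart : ∀ n < N, μ[X (n + 1) | G n] =ᵐ[μ] X n)
    (hinc : ∀ n < N, ∀ᵐ ω ∂μ, |g ω * (X (n + 1) ω - X n ω)| ≤ c n) :
    HasSubgaussianMGF (fun ω => g ω * (1 + X N ω) - 1) (v + ∑ n ∈ range N, c n ^ 2) μ := by
  induction N with
  | zero => simpa [hX0] using hg
  | succ N ih =>
    have ih := ih (fun n hn => hgG n (by omega)) (fun n hn => hXG n (by omega))
      (fun n hn => hXint n (by omega)) (fun n hn => hXmart n (by omega))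
      (fun n hn => hinc n (by omega))
    have hf : StronglyMeasurable[G N] (fun ω => g ω * (1 + X N ω) - 1) :=
      ((hgG N (by omega)).mul (stronglyMeasurable_const.add (hXG N (by omega)))).sub
        stronglyMeasurable_const
    have hmean : μ[X (N + 1) - X N | G N] =ᵐ[μ] 0 :=
      condExp_sub_ae_eq_zero (hG N) (hXint _ le_rfl) (hXint N (by omega)) (hXG N (by omega))
        (hXmart N (by omega))
    convert ih.add_mul_of_condExp_eq_zero (hG N) hf (hgG N (by omega))
      ((hXint _ le_rfl).sub (hXint N (by omega))) hmean (hinc N (by omega)) using 1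
    · ext ω; simp only [Pi.add_apply, Pi.mul_apply, Pi.sub_apply]; ring
    · rw [sum_range_succ, add_assoc]

lemma of_martingale [IsZeroOrProbabilityMeasure μ] {G : ℕ → MeasurableSpace Ω} (hG : ∀ n, G n ≤ m0)
    {X : ℕ → Ω → ℝ} {c : ℕ → ℝ≥0} {N : ℕ} (hX0 : ∀ ω, X 0 ω = 0)
    (hXG : ∀ n ≤ N, StronglyMeasurable[G n] (X n)) (hXint : ∀ n ≤ N, Integrable (X n) μ)
    (hXmart : ∀ n < N, μ[X (n + 1) | G n] =ᵐ[μ] X n)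
    (hinc : ∀ n < N, ∀ᵐ ω ∂μ, |X (n + 1) ω - X n ω| ≤ c n) :
    HasSubgaussianMGF (X N) (∑ n ∈ range N, c n ^ 2) μ := by
  simpa using mul_one_add_sub_one_of_martingale (g := fun _ => 1) (v := 0) hG (by simp)
    (fun _ _ => stronglyMeasurable_const) hX0 hXG hXint hXmart (by simpa using hinc)

lemma ofReal_one_sub_le_measure_abs_le_mul_sqrt_log [IsProbabilityMeasure μ] {X : Ω → ℝ}
    {v : ℝ≥0} (h : HasSubgaussianMGF X v μ) {σ lam : ℝ} (hσ : 0 < σ) (hv : 2 * v ≤ σ ^ 2)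
    (hlam0 : 0 < lam) (hlam2 : lam ≤ 2) :
    ENNReal.ofReal (1 - lam) ≤ μ {ω | |X ω| ≤ σ * √(log (2 / lam))} := by
  have hL : 0 ≤ log (2 / lam) := log_nonneg (by rwa [le_div_iff₀ hlam0, one_mul])
  have hexp : exp (-(σ * √(log (2 / lam))) ^ 2 / (2 * ((σ ^ 2 / 2).toNNReal : ℝ))) = lam / 2 := by
    rw [Real.coe_toNNReal _ (by positivity), mul_pow, sq_sqrt hL, neg_div,
      show σ ^ 2 * log (2 / lam) / (2 * (σ ^ 2 / 2)) = log (2 / lam) by field_simp,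
      exp_neg, exp_log (by positivity), inv_div]
  have hv' : v ≤ (σ ^ 2 / 2).toNNReal := by
    rw [← NNReal.coe_le_coe, Real.coe_toNNReal _ (by positivity)]; linarith
  have := (h.mono hv').ofReal_one_sub_le_measure_abs_le (ε := σ * √(log (2 / lam)))
    (by positivity)
  rwa [hexp, mul_div_cancel₀ lam two_ne_zero] at this

end ProbabilityTheory.HasSubgaussianMGF

def incrBound (K u : ℝ) (n : ℕ) : ℝ≥0 := (K * u * (1 + u) ^ n).toNNReal

lemma coe_incrBound {K u : ℝ} (hK : 0 ≤ K) (hu : 0 ≤ u) (n : ℕ) :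
    (incrBound K u n : ℝ) = K * u * (1 + u) ^ n :=
  Real.coe_toNNReal _ (by positivity)

lemma hasSubgaussianMGF_one_add_mul_one_add_mul_one_add_sub_one [IsProbabilityMeasure μ]
    (F : Filtration ℕ m0) {k l : ℕ} {Φ X : ℕ → Ω → ℝ} {δ : Ω → ℝ} {Kx Ky u : ℝ}
    (hKx : 1 ≤ Kx) (hKy : 1 ≤ Ky) (hu : 0 ≤ u)
    (hΦ0 : ∀ ω, Φ 0 ω = 0) (hΦmeas : ∀ n ≤ k, StronglyMeasurable[F n] (Φ n))
    (hΦint : ∀ n ≤ k, Integrable (Φ n) μ) (hΦmart : ∀ n < k, μ[Φ (n + 1) | F n] =ᵐ[μ] Φ n)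
    (hΦinc : ∀ n < k, ∀ᵐ ω ∂μ, |Φ (n + 1) ω - Φ n ω| ≤ Kx * u * (1 + u) ^ n)
    (hX0 : ∀ ω, X 0 ω = 0) (hXmeas : ∀ n ≤ l, StronglyMeasurable[F (k + n)] (X n))
    (hXint : ∀ n ≤ l, Integrable (X n) μ)
    (hXmart : ∀ n < l, μ[X (n + 1) | F (k + n)] =ᵐ[μ] X n)
    (hXinc : ∀ n < l, ∀ᵐ ω ∂μ, |X (n + 1) ω - X n ω| ≤ Ky * u * (1 + u) ^ n)
    (hδ : AEStronglyMeasurable δ μ) (hδbdd : ∀ᵐ ω ∂μ, |δ ω| ≤ u)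
    (hδmean : μ[δ | F (k + l + 1)] =ᵐ[μ] 0) :
    HasSubgaussianMGF (fun ω => (1 + Φ k ω) * (1 + X l ω) * (1 + δ ω) - 1)
      (∑ n ∈ range (k + l + 1), incrBound (Kx * Ky) u n ^ 2) μ := by
  have hK : 0 ≤ Kx * Ky := by positivity
  have hΦone := ae_abs_one_add_le_of_abs_sub_le hKx hu hΦ0 hΦinc
  have hXone := ae_abs_one_add_le_of_abs_sub_le hKy hu hX0 hXinc
  have hΦ : HasSubgaussianMGF (Φ k) (∑ n ∈ range k, incrBound (Kx * Ky) u n ^ 2) μ := by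
    refine .of_martingale F.le hΦ0 hΦmeas hΦint hΦmart
      (fun n hn => (hΦinc n hn).mono fun ω h => h.trans ?_)
    rw [coe_incrBound hK hu]
    nlinarith [show 0 ≤ Kx * u * (1 + u) ^ n by positivity]
  have hΦX : HasSubgaussianMGF (fun ω => (1 + Φ k ω) * (1 + X l ω) - 1)
      (∑ n ∈ range (k + l), incrBound (Kx * Ky) u n ^ 2) μ := by
    rw [sum_range_add]
    refine HasSubgaussianMGF.mul_one_add_sub_one_of_martingale (G := fun n => F (k + n))
      (g := fun ω => 1 + Φ k ω) (fun _ => F.le _) (by simpa using hΦ)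
      (fun _ _ => stronglyMeasurable_const.add ((hΦmeas k le_rfl).mono (F.mono (by omega))))
      hX0 hXmeas hXint hXmart fun n hn => ?_
    refine (ae_abs_mul_le_mul hΦone (hXinc n hn)).mono fun ω h => h.trans_eq ?_
    rw [coe_incrBound hK hu, pow_add]; ring
  have hg : StronglyMeasurable[F (k + l + 1)] (fun ω => (1 + Φ k ω) * (1 + X l ω)) :=
    (stronglyMeasurable_const.add ((hΦmeas k le_rfl).mono (F.mono (by omega)))).mul
      (stronglyMeasurable_const.add ((hXmeas l le_rfl).mono (F.mono (by omega))))
  have hgδ : ∀ᵐ ω ∂μ, |(1 + Φ k ω) * (1 + X l ω) * δ ω| ≤ incrBound (Kx * Ky) u (k + l) := by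
    refine (ae_abs_mul_le_mul (ae_abs_mul_le_mul hΦone hXone) hδbdd).mono
      fun ω h => h.trans_eq ?_
    rw [coe_incrBound hK hu, pow_add]; ring
  convert hΦX.add_mul_of_condExp_eq_zero (F.le _) (hg.sub stronglyMeasurable_const) hg
    (.of_bound hδ u (by simpa using hδbdd)) hδmean hgδ using 1
  · ext ω; simp only [Pi.add_apply, Pi.mul_apply]; ring
  · rw [sum_range_succ]

end

theorem karatsuba_sr_multiplication_probabilistic_bound_general
    {Ω : Type*} {m0 : MeasurableSpace Ω} (μ : Measure Ω) [IsProbabilityMeasure μ]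
    (F : Filtration ℕ m0)
    (k l : ℕ) (hk : 1 ≤ k) (hl : 1 ≤ l)
    (m : ℕ) (hm : m = k + l + 1)
    (u : ℝ) (hu0 : 0 < u)
    (Φ X : ℕ → Ω → ℝ)
    (hΦ0 : ∀ ω, Φ 0 ω = 0) (hX0 : ∀ ω, X 0 ω = 0)
    -- Φ is a martingale w.r.t. F on 0..k-1
    (hΦmeas : ∀ i ≤ k - 1, StronglyMeasurable[F i] (Φ i))
    (hΦint : ∀ i ≤ k - 1, Integrable (Φ i) μ)
    (hΦmart : ∀ i, 1 ≤ i → i ≤ k - 1 → μ[Φ i | F (i - 1)] =ᵐ[μ] Φ (i - 1))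
    -- X is a martingale for the shifted filtration G j = F (k-1+j)
    (hXmeas : ∀ j ≤ l - 1, StronglyMeasurable[F (k - 1 + j)] (X j))
    (hXint : ∀ j ≤ l - 1, Integrable (X j) μ)
    (hXmart : ∀ j, 1 ≤ j → j ≤ l - 1 → μ[X j | F (k - 1 + j - 1)] =ᵐ[μ] X (j - 1))
    -- increment bounds
    (Kx Ky : ℝ) (hKx : 1 ≤ Kx) (hKy : 1 ≤ Ky)
    (hΦstep : ∀ i, 1 ≤ i → i ≤ k - 1 →
      ∀ᵐ ω ∂μ, |Φ i ω - Φ (i - 1) ω| ≤ Kx * u * (1 + u) ^ (i - 1))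
    (hXstep : ∀ j, 1 ≤ j → j ≤ l - 1 →
      ∀ᵐ ω ∂μ, |X j ω - X (j - 1) ω| ≤ Ky * u * (1 + u) ^ (j - 1))
    -- δ is a mean-independent rounding error at time m-1
    (δ : Ω → ℝ)
    (hδmeas : StronglyMeasurable[F (m - 1)] δ)
    (hδbdd : ∀ᵐ ω ∂μ, |δ ω| ≤ u)
    (hδmean : μ[δ | F (m - 2)] =ᵐ[μ] 0)
    -- relative error of the computed product
    (Ψ : Ω → ℝ)
    (hΨ : ∀ ω, Ψ ω = (1 + Φ (k - 1) ω) * (1 + X (l - 1) ω) * (1 + δ ω) - 1)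
    (lam : ℝ) (hlam0 : 0 < lam) (hlam1 : lam < 1) :
    ENNReal.ofReal (1 - lam) ≤
      μ {ω | |Ψ ω| ≤
        Kx * Ky * Real.sqrt (u * ((1 + u) ^ (2 * (m - 1)) - 1)) *
          Real.sqrt (Real.log (2 / lam))} := by
  subst hm
  have hγ : 0 < (1 + u) ^ (2 * (k + l + 1 - 1)) - 1 :=
    sub_pos.2 (one_lt_pow₀ (by linarith) (by omega))
  have hΨsub : HasSubgaussianMGF Ψ
      (∑ n ∈ range (k - 1 + (l - 1) + 1), incrBound (Kx * Ky) u n ^ 2) μ := by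
    convert hasSubgaussianMGF_one_add_mul_one_add_mul_one_add_sub_one F hKx hKy hu0.le
      hΦ0 hΦmeas hΦint (fun n hn => by simpa using hΦmart (n + 1) (by omega) hn)
      (fun n hn => by simpa using hΦstep (n + 1) (by omega) hn) hX0 hXmeas hXint
      (fun n hn => by
        simpa [show k - 1 + (n + 1) - 1 = k - 1 + n by omega] using
          hXmart (n + 1) (by omega) hn)
      (fun n hn => by simpa using hXstep (n + 1) (by omega) hn)
      (hδmeas.mono (F.le _)).aestronglyMeasurable hδbdd
      (by rwa [show k - 1 + (l - 1) + 1 = k + l + 1 - 2 by omega]) using 1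
    exact funext hΨ
  refine hΨsub.ofReal_one_sub_le_measure_abs_le_mul_sqrt_log (by positivity) ?_ hlam0
    (by linarith)
  rw [mul_pow, sq_sqrt (by positivity)]
  push_cast [coe_incrBound (by positivity : 0 ≤ Kx * Ky) hu0.le]
  refine (two_mul_sum_sq_mul_geom_le (Kx * Ky) hu0.le _).trans ?_
  gcongr _ * (_ * ((1 + u) ^ ?_ - 1))
  · linarith
  · omega

/-- Multiplication case (Corollary 2): probabilistic bound for the relative error `Ψ` of the
computed product `ẑ = x(1+Φ_{k-1}) · y(1+X_{l-1}) · (1+δ) = xy(1+Ψ)` of nonzero reals `x`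
and `y` under stochastic rounding, where `γ_N(u) = (1+u)^N - 1` and `m = k + l + 1`. -/
theorem karatsuba_sr_multiplication_probabilistic_bound
    {Ω : Type*} {m0 : MeasurableSpace Ω} (μ : Measure Ω) [IsProbabilityMeasure μ]
    (F : Filtration ℕ m0)
    (k l : ℕ) (hk : 1 ≤ k) (hl : 1 ≤ l)
    (m : ℕ) (hm : m = k + l + 1)
    (u : ℝ) (hu0 : 0 < u) (hu1 : u < 1)
    (x y : ℝ) (hx : x ≠ 0) (hy : y ≠ 0)
    (Φ X : ℕ → Ω → ℝ)
    (hΦ0 : ∀ ω, Φ 0 ω = 0) (hX0 : ∀ ω, X 0 ω = 0)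
    -- Φ is a martingale w.r.t. F on 0..k-1
    (hΦmeas : ∀ i ≤ k - 1, StronglyMeasurable[F i] (Φ i))
    (hΦint : ∀ i ≤ k - 1, Integrable (Φ i) μ)
    (hΦmart : ∀ i, 1 ≤ i → i ≤ k - 1 → μ[Φ i | F (i - 1)] =ᵐ[μ] Φ (i - 1))
    -- X is a martingale for the shifted filtration G j = F (k-1+j)
    (hXmeas : ∀ j ≤ l - 1, StronglyMeasurable[F (k - 1 + j)] (X j))
    (hXint : ∀ j ≤ l - 1, Integrable (X j) μ)
    (hXmart : ∀ j, 1 ≤ j → j ≤ l - 1 → μ[X j | F (k - 1 + j - 1)] =ᵐ[μ] X (j - 1))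
    -- increment bounds
    (Kx Ky : ℝ) (hKx : 1 ≤ Kx) (hKy : 1 ≤ Ky)
    (hΦstep : ∀ i, 1 ≤ i → i ≤ k - 1 →
      ∀ᵐ ω ∂μ, |Φ i ω - Φ (i - 1) ω| ≤ Kx * u * (1 + u) ^ (i - 1))
    (hXstep : ∀ j, 1 ≤ j → j ≤ l - 1 →
      ∀ᵐ ω ∂μ, |X j ω - X (j - 1) ω| ≤ Ky * u * (1 + u) ^ (j - 1))
    -- δ is a mean-independent rounding error at time m-1
    (δ : Ω → ℝ)
    (hδmeas : StronglyMeasurable[F (m - 1)] δ)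
    (hδbdd : ∀ᵐ ω ∂μ, |δ ω| ≤ u)
    (hδmean : μ[δ | F (m - 2)] =ᵐ[μ] 0)
    -- relative error of the computed product
    (Ψ : Ω → ℝ)
    (hΨ : ∀ ω, Ψ ω = (1 + Φ (k - 1) ω) * (1 + X (l - 1) ω) * (1 + δ ω) - 1)
    (lam : ℝ) (hlam0 : 0 < lam) (hlam1 : lam < 1) :
    ENNReal.ofReal (1 - lam) ≤
      μ {ω | |Ψ ω| ≤
        Kx * Ky * Real.sqrt (u * ((1 + u) ^ (2 * (m - 1)) - 1)) *
          Real.sqrt (Real.log (2 / lam))} :=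
  karatsuba_sr_multiplication_probabilistic_bound_general μ F k l hk hl m hm u hu0 Φ X hΦ0 hX0
    hΦmeas hΦint hΦmart hXmeas hXint hXmart Kx Ky hKx hKy hΦstep hXstep δ hδmeas hδbdd hδmean Ψ hΨ
    lam hlam0 hlam1
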